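/- arXiv:2402.05299 — 2 statements merged into one kernel-verified Lean document; each statement's English description precedes it below -/
import Mathlib

section
/- Let 0 < p < ∞ and let u, w be weights on ℝ and (0,∞) respectively. Suppose there is a constant C such that for every measurable set F of finite Lebesgue measure, Hχ_F is defined almost everywhere and ‖Hχ_F‖_{Λ^{p,∞}_u(w)} ≤ C ‖χ_F‖_{Λ^p_u(w)}. Then there is a constant C′ such that for every bounded interval I and every measurable set E ⊆ I with |E| > 0, W(u(I)) ≤ C′ (|I|/|E|)^p · W(u(E)). -/
open MeasureTheory Filter Topology
open scoped ENNReal NNReal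

noncomputable section

/-- The `u`-measure of a set `E`, `u(E) = ∫_E u`, as an extended nonnegative real. -/
def wMeas (u : ℝ → ℝ) (E : Set ℝ) : ℝ≥0∞ := ∫⁻ x in E, ENNReal.ofReal (u x)

/-- The `u`-measure of a set `E`, `u(E) = ∫_E u(x) dx`, as a real number. -/
def wInt (u : ℝ → ℝ) (E : Set ℝ) : ℝ := ∫ x in E, u x

/-- `W(r) = ∫_0^r w(s) ds`. -/
def Wf (w : ℝ → ℝ) (r : ℝ) : ℝ := ∫ t in Set.Ioo (0:ℝ) r, w t

/-- A weight on `ℝ`: a positive locally integrable function. -/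
def IsWeight (u : ℝ → ℝ) : Prop :=
  (∀ x, 0 < u x) ∧ MeasureTheory.LocallyIntegrable u volume

/-- A weight on `(0,∞)`: positive there and locally integrable on `(0,r)` for every `r > 0`. -/
def IsWeightOn (w : ℝ → ℝ) : Prop :=
  (∀ t, 0 < t → 0 < w t) ∧ ∀ r, 0 < r → MeasureTheory.IntegrableOn w (Set.Ioo (0:ℝ) r) volume

/-- Decreasing rearrangement (with respect to the weight `u`) of an `ℝ≥0∞`-valued function. -/
def rearrE (u : ℝ → ℝ) (g : ℝ → ℝ≥0∞) (t : ℝ) : ℝ≥0∞ :=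
  sInf {s : ℝ≥0∞ | wMeas u {x | s < g x} ≤ ENNReal.ofReal t}

/-- Decreasing rearrangement `f*_u` of `f` with respect to the weight `u`. -/
def rearr (u f : ℝ → ℝ) (t : ℝ) : ℝ≥0∞ :=
  rearrE u (fun x => ENNReal.ofReal |f x|) t

/-- The quasinorm of `Λ^p_u(w)` for `ℝ≥0∞`-valued functions. -/
def lorentzNormE (p : ℝ) (u w : ℝ → ℝ) (g : ℝ → ℝ≥0∞) : ℝ≥0∞ :=
  (∫⁻ t in Set.Ioi (0:ℝ), rearrE u g t ^ p * ENNReal.ofReal (w t)) ^ (1/p)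

/-- The quasinorm of the weighted Lorentz space `Λ^p_u(w)`. -/
def lorentzNorm (p : ℝ) (u w f : ℝ → ℝ) : ℝ≥0∞ :=
  lorentzNormE p u w (fun x => ENNReal.ofReal |f x|)

/-- The quasinorm of `Λ^{p,∞}_u(w)` for `ℝ≥0∞`-valued functions. -/
def weakLorentzNormE (p : ℝ) (u w : ℝ → ℝ) (g : ℝ → ℝ≥0∞) : ℝ≥0∞ :=
  ⨆ t ∈ Set.Ioi (0:ℝ), ENNReal.ofReal (Wf w t) ^ (1/p) * rearrE u g t

/-- The quasinorm of the weak weighted Lorentz space `Λ^{p,∞}_u(w)`. -/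
def weakLorentzNorm (p : ℝ) (u w f : ℝ → ℝ) : ℝ≥0∞ :=
  weakLorentzNormE p u w (fun x => ENNReal.ofReal |f x|)

/-- Membership in `Λ^p_u(w)`. -/
def MemLambda (p : ℝ) (u w f : ℝ → ℝ) : Prop :=
  Measurable f ∧ lorentzNorm p u w f < ∞

/-- The quasinorm of the Lorentz space `L^{p,q}(u)`, `0 < q ≤ ∞`. -/
def lpqNorm (p : ℝ) (q : ℝ≥0∞) (u f : ℝ → ℝ) : ℝ≥0∞ :=
  if q = ∞ then ⨆ t ∈ Set.Ioi (0:ℝ), ENNReal.ofReal t ^ (1/p) * rearr u f t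
  else (∫⁻ t in Set.Ioi (0:ℝ),
      (ENNReal.ofReal t ^ (1/p) * rearr u f t) ^ q.toReal / ENNReal.ofReal t) ^ (1/q.toReal)

/-- Membership in `L^{p,q}(u)`. -/
def MemLpq (p : ℝ) (q : ℝ≥0∞) (u f : ℝ → ℝ) : Prop :=
  Measurable f ∧ lpqNorm p q u f < ∞

/-- The associate norm `‖g‖_{(Λ^p_u(w))'}`. -/
def assocNorm (p : ℝ) (u w g : ℝ → ℝ) : ℝ≥0∞ :=
  ⨆ (f : ℝ → ℝ) (_ : MemLambda p u w f) (_ : lorentzNorm p u w f ≠ 0),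
    ENNReal.ofReal |∫ x, f x * g x * u x| / lorentzNorm p u w f

/-- The truncated Hilbert integral `∫_{|x−y|>ε} f(y)/(x−y) dy`. -/
def pvIntegral (f : ℝ → ℝ) (x ε : ℝ) : ℝ :=
  ∫ y in {y : ℝ | ε < |x - y|}, f y / (x - y)

/-- The principal value limit defining `Hf(x)` exists and equals `L`. -/
def HasHilbert (f : ℝ → ℝ) (x L : ℝ) : Prop :=
  Filter.Tendsto (fun ε : ℝ => (1 / Real.pi) * pvIntegral f x ε) (𝓝[>] 0) (𝓝 L)

/-- The Hilbert transform `Hf(x)` (junk value where the principal value does not exist). -/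
def hilbert (f : ℝ → ℝ) (x : ℝ) : ℝ :=
  limUnder (𝓝[>] (0:ℝ)) (fun ε => (1 / Real.pi) * pvIntegral f x ε)

/-- The Hilbert maximal operator `H*f(x)`. -/
def hilbertMax (f : ℝ → ℝ) (x : ℝ) : ℝ≥0∞ :=
  ⨆ ε ∈ Set.Ioi (0:ℝ), ENNReal.ofReal ((1 / Real.pi) * |pvIntegral f x ε|)

/-- The Hardy–Littlewood maximal operator over intervals of `ℝ`. -/
def maxOp (u : ℝ → ℝ) (x : ℝ) : ℝ≥0∞ :=
  ⨆ (a : ℝ) (b : ℝ) (_ : x ∈ Set.Ioo a b),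
    (∫⁻ y in Set.Ioo a b, ENNReal.ofReal |u y|) / ENNReal.ofReal (b - a)

/-- The Muckenhoupt class `A_1`: `Mu ≤ C u` a.e. -/
def A1 (u : ℝ → ℝ) : Prop :=
  ∃ C : ℝ, 0 < C ∧ ∀ᵐ x : ℝ ∂volume, maxOp u x ≤ ENNReal.ofReal (C * u x)

/-- The Muckenhoupt class `A_p`, `p > 1`. -/
def Ap (p : ℝ) (u : ℝ → ℝ) : Prop :=
  ∃ C : ℝ, 0 < C ∧ ∀ a b : ℝ, a < b →
    ((∫⁻ x in Set.Ioo a b, ENNReal.ofReal (u x)) / ENNReal.ofReal (b - a)) *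
      ((∫⁻ x in Set.Ioo a b, ENNReal.ofReal (u x ^ (-1 / (p - 1)))) /
        ENNReal.ofReal (b - a)) ^ (p - 1)
      ≤ ENNReal.ofReal C

/-- The class `B_p`: `∫_r^∞ (r/t)^p w(t) dt ≤ C W(r)`. -/
def Bp (p : ℝ) (w : ℝ → ℝ) : Prop :=
  ∃ C : ℝ, 0 < C ∧ ∀ r : ℝ, 0 < r →
    (∫⁻ t in Set.Ioi r, ENNReal.ofReal ((r / t) ^ p * w t)) ≤ ENNReal.ofReal (C * Wf w r)

/-- The class `B_{p,∞}`: the Hardy operator maps `L^p_dec(w)` to `L^{p,∞}(w)`. -/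
def BpInfty (p : ℝ) (w : ℝ → ℝ) : Prop :=
  ∃ C : ℝ, 0 < C ∧ ∀ f : ℝ → ℝ, (∀ t, 0 < t → 0 ≤ f t) → AntitoneOn f (Set.Ioi 0) →
    ∀ t : ℝ, 0 < t →
      ENNReal.ofReal (Wf w t) ^ (1/p) *
          ((∫⁻ s in Set.Ioo (0:ℝ) t, ENNReal.ofReal (f s)) / ENNReal.ofReal t)
        ≤ ENNReal.ofReal C *
            (∫⁻ s in Set.Ioi (0:ℝ), ENNReal.ofReal (f s) ^ p * ENNReal.ofReal (w s)) ^ (1/p)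

/-- The class `B*_∞`: `∫_0^r W(t)/t dt ≤ C W(r)`. -/
def BstarInfty (w : ℝ → ℝ) : Prop :=
  ∃ C : ℝ, 0 < C ∧ ∀ r : ℝ, 0 < r →
    (∫⁻ t in Set.Ioo (0:ℝ) r, ENNReal.ofReal (Wf w t / t)) ≤ ENNReal.ofReal (C * Wf w r)

/-- The `Δ_2` condition: `W(2r) ≤ C W(r)`. -/
def Delta2 (w : ℝ → ℝ) : Prop :=
  ∃ C : ℝ, 0 < C ∧ ∀ r : ℝ, 0 < r → Wf w (2 * r) ≤ C * Wf w r

/-- A doubling weight on `ℝ`: `u(2I) ≤ C u(I)` for every bounded interval `I`. -/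
def DoublingWeight (u : ℝ → ℝ) : Prop :=
  ∃ C : ℝ, 0 < C ∧ ∀ c r : ℝ, 0 < r →
    wInt u (Set.Ioo (c - 2*r) (c + 2*r)) ≤ C * wInt u (Set.Ioo (c - r) (c + r))

/-- `φ_I(t) = sup{|E| : E ⊆ I, u(E) = t}` for `I = (a,b)`. -/
def phiI (u : ℝ → ℝ) (a b t : ℝ) : ℝ :=
  sSup {m : ℝ | ∃ E : Set ℝ, MeasurableSet E ∧ E ⊆ Set.Ioo a b ∧
    wInt u E = t ∧ (volume E).toReal = m}

/-- The index `p_w`:  `inf{p > 0 : t^p/W(t) ∈ L^{p'-1}((0,1), dt/t)}`, where for `p ≤ 1`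
(`p' = ∞`) the condition means essential boundedness on `(0,1)`. -/
def pwIndex (w : ℝ → ℝ) : ℝ :=
  sInf {p : ℝ | 0 < p ∧
    ((p ≤ 1 ∧ ∃ C : ℝ, ∀ᵐ t ∂(volume.restrict (Set.Ioo (0:ℝ) 1)), t ^ p / Wf w t ≤ C) ∨
     (1 < p ∧ (∫⁻ t in Set.Ioo (0:ℝ) 1,
        ENNReal.ofReal ((t ^ p / Wf w t) ^ (1 / (p - 1)) / t)) < ∞))}

/-!
For `x` in an interval `J` adjacent to `I = (a, b)` and of the same length, the kernel
`1 / (x - y)` has constant sign and modulus at least `1 / (2|I|)` for `y ∈ I`, so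
`|Hχ_E| ≥ |E| / (2π|I|)` on `J`. Hence the weak-type bound controls `W(t)` by `W(u(E))` for every
`t < u(J)`, and letting `t → u(J)` gives `W(u(J)) ≤ (2πC|I|/|E|)^p W(u(E))`. Applying this to
`E ⊆ I` with `J = (b, 2b - a)`, and then to `J` with `I` as its left neighbour, gives the claim
with `C' = (4π²C²)^p`.
-/

open Set

lemma ofReal_mul_rpow_one_div {a s p : ℝ} (ha : 0 ≤ a) (hs : 0 ≤ s) (hp : 0 < p) :
    ENNReal.ofReal (a * s ^ p) ^ (1 / p) = ENNReal.ofReal a ^ (1 / p) * ENNReal.ofReal s := by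
  rw [ENNReal.ofReal_mul ha, ENNReal.mul_rpow_of_nonneg _ _ (by positivity),
    ← ENNReal.ofReal_rpow_of_nonneg hs hp.le, ← ENNReal.rpow_mul, mul_one_div_cancel hp.ne',
    ENNReal.rpow_one]

lemma IsWeight.integrableOn_Ioo {u : ℝ → ℝ} (hu : IsWeight u) (a b : ℝ) :
    IntegrableOn u (Ioo a b) :=
  (hu.2.integrableOn_isCompact isCompact_Icc).mono_set Ioo_subset_Icc_self

lemma wMeas_eq_ofReal_wInt {u : ℝ → ℝ} (hu : ∀ x, 0 ≤ u x) {S : Set ℝ}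
    (hS : IntegrableOn u S) : wMeas u S = ENNReal.ofReal (wInt u S) :=
  (ofReal_integral_eq_lintegral_ofReal hS (.of_forall hu)).symm

namespace IsWeightOn

variable {w : ℝ → ℝ}

lemma integrableOn_Ioo (hw : IsWeightOn w) (T : ℝ) : IntegrableOn w (Ioo 0 T) := by
  rcases lt_or_ge 0 T with hT | hT
  · exact hw.2 T hT
  · simp [Ioo_eq_empty_of_le hT]

lemma Wf_nonneg (hw : IsWeightOn w) (r : ℝ) : 0 ≤ Wf w r :=
  setIntegral_nonneg measurableSet_Ioo fun t ht => (hw.1 t ht.1).le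

lemma ofReal_Wf_eq_lintegral (hw : IsWeightOn w) (T : ℝ) :
    ENNReal.ofReal (Wf w T) = ∫⁻ t in Ioo 0 T, ENNReal.ofReal (w t) :=
  ofReal_integral_eq_lintegral_ofReal (hw.integrableOn_Ioo T)
    ((ae_restrict_iff' measurableSet_Ioo).2 (.of_forall fun t ht => (hw.1 t ht.1).le))

lemma continuousOn_Wf (hw : IsWeightOn w) (T : ℝ) : ContinuousOn (Wf w) (Icc 0 T) := by
  rcases lt_or_ge 0 T with hT | hT
  · have hint : IntegrableOn w (uIcc 0 T) := by
      rw [uIcc_of_le hT.le, integrableOn_Icc_iff_integrableOn_Ioo]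
      exact hw.2 T hT
    rw [← uIcc_of_le hT.le]
    refine (intervalIntegral.continuousOn_primitive_interval hint).congr fun t ht => ?_
    rw [uIcc_of_le hT.le] at ht
    simp only [Wf]
    rw [intervalIntegral.integral_of_le ht.1, integral_Ioc_eq_integral_Ioo]
  · exact (subsingleton_Icc_of_ge hT).continuousOn _

lemma Wf_le_of_forall_lt (hw : IsWeightOn w) {T K : ℝ} (hT : 0 < T)
    (hK : ∀ t ∈ Ioo 0 T, Wf w t ≤ K) :
    Wf w T ≤ K := by
  have hcont := (hw.continuousOn_Wf T).continuousWithinAt (right_mem_Icc.2 hT.le)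
  refine ContinuousWithinAt.closure_le (g := fun _ => K) ?_ (hcont.mono Ioo_subset_Icc_self)
    continuousWithinAt_const hK
  rw [closure_Ioo hT.ne]
  exact right_mem_Icc.2 hT.le

end IsWeightOn

lemma rearrE_indicator_one (u : ℝ → ℝ) (E : Set ℝ) (t : ℝ) :
    rearrE u (E.indicator 1) t = if ENNReal.ofReal t < wMeas u E then 1 else 0 := by
  have hlevel : ∀ s : ℝ≥0∞, {x | s < E.indicator 1 x} = if s < 1 then E else ∅ := by
    intro s
    ext x
    by_cases hx : x ∈ E <;> split_ifs with hs <;> simp [hx, hs]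
  unfold rearrE
  split_ifs with ht
  · refine le_antisymm (sInf_le ?_) (le_sInf fun s hs => ?_)
    · simp [hlevel, wMeas]
    · by_contra! hs1
      simp only [mem_ofPred_eq, hlevel, if_pos hs1] at hs
      exact (hs.trans_lt ht).false
  · exact le_antisymm (sInf_le (by simpa [hlevel] using ht)) zero_le

lemma lorentzNorm_indicator_one {p : ℝ} (hp : 0 < p) {u w : ℝ → ℝ} (hu : ∀ x, 0 ≤ u x)
    (hw : IsWeightOn w) {E : Set ℝ} (hE : IntegrableOn u E) :
    lorentzNorm p u w (E.indicator fun _ => 1) = ENNReal.ofReal (Wf w (wInt u E)) ^ (1 / p) := by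
  have hind : (fun x => ENNReal.ofReal |E.indicator (fun _ => (1 : ℝ)) x|) = E.indicator 1 := by
    ext x
    by_cases hx : x ∈ E <;> simp [hx]
  have hrearr : ∀ t ∈ Ioi (0 : ℝ), rearrE u (E.indicator 1) t ^ p * ENNReal.ofReal (w t)
      = (Iio (wInt u E)).indicator (fun t => ENNReal.ofReal (w t)) t := by
    intro t ht
    rw [rearrE_indicator_one, wMeas_eq_ofReal_wInt hu hE]
    simp only [ENNReal.ofReal_lt_ofReal_iff_of_nonneg (le_of_lt ht), indicator_apply, mem_Iio]
    split_ifs <;> simp [ENNReal.zero_rpow_of_pos hp]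
  rw [lorentzNorm, lorentzNormE, hind, setLIntegral_congr_fun measurableSet_Ioi hrearr,
    lintegral_indicator measurableSet_Iio, Measure.restrict_restrict measurableSet_Iio,
    Iio_inter_Ioi, hw.ofReal_Wf_eq_lintegral]

lemma le_rearrE_of_forall_le {u : ℝ → ℝ} {g : ℝ → ℝ≥0∞} {J : Set ℝ} {s : ℝ≥0∞} {t : ℝ}
    (hJ : ∀ x ∈ J, s ≤ g x) (ht : ENNReal.ofReal t < wMeas u J) : s ≤ rearrE u g t := by
  refine le_sInf fun s' hs' => ?_
  by_contra! hs
  have hsub : J ⊆ {x | s' < g x} := fun x hx => hs.trans_le (hJ x hx)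
  exact (ht.trans_le ((lintegral_mono_set hsub).trans hs')).false

lemma le_weakLorentzNormE (p : ℝ) (u w : ℝ → ℝ) (g : ℝ → ℝ≥0∞) {t : ℝ} (ht : 0 < t) :
    ENNReal.ofReal (Wf w t) ^ (1 / p) * rearrE u g t ≤ weakLorentzNormE p u w g :=
  le_iSup₂ (f := fun t (_ : t ∈ Ioi (0 : ℝ)) => ENNReal.ofReal (Wf w t) ^ (1 / p) * rearrE u g t)
    t ht

lemma hilbert_eq_integral_of_le_abs_sub {f : ℝ → ℝ} {x δ : ℝ} (hδ : 0 < δ)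
    (hf : ∀ y, f y ≠ 0 → δ ≤ |x - y|) :
    hilbert f x = 1 / Real.pi * ∫ y, f y / (x - y) := by
  have hpv : ∀ ε ∈ Ioo 0 δ, pvIntegral f x ε = ∫ y, f y / (x - y) := by
    intro ε hε
    refine setIntegral_eq_integral_of_forall_compl_eq_zero fun y hy => ?_
    by_contra hne
    exact hy (hε.2.trans_le (hf y (left_ne_zero_of_mul hne)))
  refine Tendsto.limUnder_eq (tendsto_const_nhds.congr' ?_)
  filter_upwards [Ioo_mem_nhdsGT hδ] with ε hε
  rw [hpv ε hε]

lemma le_abs_hilbert_indicator_one {E : Set ℝ} (hE : MeasurableSet E) {a b x D : ℝ}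
    (hEab : E ⊆ Ioo a b) (hx : x < a ∨ b < x) (hD : ∀ y ∈ Ioo a b, |x - y| ≤ D) :
    (volume E).toReal / (Real.pi * D) ≤ |hilbert (E.indicator fun _ => 1) x| := by
  obtain ⟨δ, hδ, hsep⟩ : ∃ δ > 0, ∀ y ∈ Ioo a b, δ ≤ |x - y| := by
    rcases hx with hxa | hbx
    · exact ⟨a - x, by linarith, fun y hy => by rw [abs_sub_comm, abs_of_pos] <;> linarith [hy.1]⟩
    · exact ⟨x - b, by linarith, fun y hy => by rw [abs_of_pos] <;> linarith [hy.2]⟩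
  have hEfin : volume E ≠ ∞ := ((measure_mono hEab).trans_lt measure_Ioo_lt_top).ne
  have hint : IntegrableOn (fun y => (x - y)⁻¹) E := by
    refine (ContinuousOn.integrableOn_Icc ?_).mono_set (hEab.trans Ioo_subset_Icc_self)
    refine (continuousOn_const.sub continuousOn_id).inv₀ fun y hy => sub_ne_zero.2 ?_
    intro hxy
    rcases hx with hxa | hbx <;> simp only [id] at hxy <;> linarith [hy.1, hy.2]
  have hinv : ∀ y ∈ E, D⁻¹ ≤ |(x - y)⁻¹| := fun y hy => by
    rw [abs_inv]
    exact inv_anti₀ (hδ.trans_le (hsep y (hEab hy))) (hD y (hEab hy))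
  have hlow : D⁻¹ * (volume E).toReal ≤ |∫ y in E, (x - y)⁻¹| := by
    rcases hx with hxa | hbx
    · have hneg : ∀ y ∈ E, |(x - y)⁻¹| = -(x - y)⁻¹ := fun y hy =>
        abs_of_neg (inv_lt_zero.2 (by linarith [(hEab hy).1]))
      calc D⁻¹ * (volume E).toReal ≤ ∫ y in E, -(x - y)⁻¹ :=
            setIntegral_ge_of_const_le_real hE hEfin
              (fun y hy => (hinv y hy).trans_eq (hneg y hy)) hint.neg
        _ = -∫ y in E, (x - y)⁻¹ := integral_neg _
        _ ≤ _ := neg_le_abs _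
    · have hpos : ∀ y ∈ E, |(x - y)⁻¹| = (x - y)⁻¹ := fun y hy =>
        abs_of_pos (inv_pos.2 (by linarith [(hEab hy).2]))
      calc D⁻¹ * (volume E).toReal ≤ ∫ y in E, (x - y)⁻¹ :=
            setIntegral_ge_of_const_le_real hE hEfin
              (fun y hy => (hinv y hy).trans_eq (hpos y hy)) hint
        _ ≤ _ := le_abs_self _
  have hH : hilbert (E.indicator fun _ => 1) x = 1 / Real.pi * ∫ y in E, (x - y)⁻¹ := by
    rw [hilbert_eq_integral_of_le_abs_sub hδ fun y hy => hsep y (hEab (by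
      by_contra hyE
      exact hy (indicator_of_notMem hyE _))), ← integral_indicator hE]
    congr 2 with y
    by_cases hy : y ∈ E <;> simp [hy]
  calc (volume E).toReal / (Real.pi * D) = 1 / Real.pi * (D⁻¹ * (volume E).toReal) := by ring
    _ ≤ 1 / Real.pi * |∫ y in E, (x - y)⁻¹| := by gcongr
    _ = |hilbert (E.indicator fun _ => 1) x| := by
        rw [hH, abs_mul, abs_of_pos (one_div_pos.2 Real.pi_pos)]

lemma Wf_wInt_mul_rpow_le_of_weakLorentzNorm_le {p : ℝ} (hp : 0 < p) {u w g : ℝ → ℝ}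
    (hu : ∀ x, 0 ≤ u x) (hw : IsWeightOn w) {J : Set ℝ} (hJ : IntegrableOn u J) {s K : ℝ}
    (hs : 0 < s) (hK : 0 ≤ K) (hg : ∀ x ∈ J, s ≤ |g x|)
    (hweak : weakLorentzNorm p u w g ≤ ENNReal.ofReal K ^ (1 / p)) :
    Wf w (wInt u J) * s ^ p ≤ K := by
  rcases le_or_gt (wInt u J) 0 with hT | hT
  · simpa [Wf, Ioo_eq_empty_of_le hT] using hK
  have hbound : ∀ t ∈ Ioo 0 (wInt u J), Wf w t * s ^ p ≤ K := by
    intro t ht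
    have hrearr : ENNReal.ofReal s ≤ rearrE u (fun x => ENNReal.ofReal |g x|) t :=
      le_rearrE_of_forall_le (fun x hx => ENNReal.ofReal_le_ofReal (hg x hx))
        (by rw [wMeas_eq_ofReal_wInt hu hJ]; exact ENNReal.ofReal_lt_ofReal_iff'.2 ⟨ht.2, hT⟩)
    have hle : ENNReal.ofReal (Wf w t * s ^ p) ^ (1 / p) ≤ ENNReal.ofReal K ^ (1 / p) :=
      calc ENNReal.ofReal (Wf w t * s ^ p) ^ (1 / p)
          = ENNReal.ofReal (Wf w t) ^ (1 / p) * ENNReal.ofReal s :=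
            ofReal_mul_rpow_one_div (hw.Wf_nonneg t) hs.le hp
        _ ≤ ENNReal.ofReal (Wf w t) ^ (1 / p) * rearrE u (fun x => ENNReal.ofReal |g x|) t := by
            gcongr
        _ ≤ weakLorentzNorm p u w g := le_weakLorentzNormE p u w _ ht.1
        _ ≤ ENNReal.ofReal K ^ (1 / p) := hweak
    rwa [ENNReal.rpow_le_rpow_iff (one_div_pos.2 hp), ENNReal.ofReal_le_ofReal_iff hK] at hle
  exact (le_div_iff₀ (by positivity)).1 <| hw.Wf_le_of_forall_lt hT fun t ht =>
    (le_div_iff₀ (by positivity)).2 (hbound t ht)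

lemma Wf_wInt_le_of_weakType_indicator {p C : ℝ} (hp : 0 < p) (hC : 0 ≤ C) {u w : ℝ → ℝ}
    (hu : IsWeight u) (hw : IsWeightOn w) {E J : Set ℝ} {a b D : ℝ} (hE : MeasurableSet E)
    (hEab : E ⊆ Ioo a b) (hm : 0 < (volume E).toReal) (hD : 0 < D)
    (hweak : weakLorentzNorm p u w (hilbert (E.indicator fun _ => 1))
      ≤ ENNReal.ofReal C * lorentzNorm p u w (E.indicator fun _ => 1))
    (hJ : IntegrableOn u J) (hJout : ∀ x ∈ J, x < a ∨ b < x)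
    (hJD : ∀ x ∈ J, ∀ y ∈ Ioo a b, |x - y| ≤ D) :
    Wf w (wInt u J) ≤ (C * (Real.pi * D / (volume E).toReal)) ^ p * Wf w (wInt u E) := by
  set s := (volume E).toReal / (Real.pi * D)
  have hs : 0 < s := by positivity
  have hK : weakLorentzNorm p u w (hilbert (E.indicator fun _ => 1))
      ≤ ENNReal.ofReal (C ^ p * Wf w (wInt u E)) ^ (1 / p) := by
    rwa [mul_comm, ofReal_mul_rpow_one_div (hw.Wf_nonneg _) hC hp, mul_comm,
      ← lorentzNorm_indicator_one hp (fun x => (hu.1 x).le) hw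
        ((hu.integrableOn_Ioo a b).mono_set hEab)]
  have hJE := Wf_wInt_mul_rpow_le_of_weakLorentzNorm_le hp (fun x => (hu.1 x).le) hw hJ hs
    (by positivity [hw.Wf_nonneg (wInt u E)])
    (fun x hx => le_abs_hilbert_indicator_one hE hEab (hJout x hx) (hJD x hx)) hK
  calc Wf w (wInt u J) ≤ C ^ p * Wf w (wInt u E) / s ^ p := (le_div_iff₀ (by positivity)).2 hJE
    _ = (C * s⁻¹) ^ p * Wf w (wInt u E) := by
        rw [Real.mul_rpow hC (inv_nonneg.2 hs.le), Real.inv_rpow hs.le]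
        ring
    _ = (C * (Real.pi * D / (volume E).toReal)) ^ p * Wf w (wInt u E) := by rw [inv_div]

/-- the weak-type inequality on characteristic functions implies the
quasi-concavity type condition on `W ∘ u`. -/
theorem quasiconcavity_of_weak_type (p : ℝ) (hp : 0 < p) (u w : ℝ → ℝ)
    (hu : IsWeight u) (hw : IsWeightOn w)
    (h : ∃ C : ℝ, 0 < C ∧ ∀ F : Set ℝ, MeasurableSet F → volume F < ∞ →
      (∀ᵐ x : ℝ ∂volume, ∃ L, HasHilbert (F.indicator fun _ => (1:ℝ)) x L) ∧
      weakLorentzNorm p u w (hilbert (F.indicator fun _ => (1:ℝ)))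
        ≤ ENNReal.ofReal C * lorentzNorm p u w (F.indicator fun _ => (1:ℝ))) :
    ∃ C' : ℝ, 0 < C' ∧ ∀ a b : ℝ, a < b → ∀ E : Set ℝ, MeasurableSet E →
      E ⊆ Set.Ioo a b → 0 < (volume E).toReal →
      Wf w (wInt u (Set.Ioo a b))
        ≤ C' * ((b - a) / (volume E).toReal) ^ p * Wf w (wInt u E) := by
  obtain ⟨C, hC, hweak⟩ := h
  refine ⟨(4 * Real.pi ^ 2 * C ^ 2) ^ p, by positivity, fun a b hab E hE hEab hm => ?_⟩
  have hweak' : ∀ F c d, MeasurableSet F → F ⊆ Ioo c d →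
      weakLorentzNorm p u w (hilbert (F.indicator fun _ => 1))
        ≤ ENNReal.ofReal C * lorentzNorm p u w (F.indicator fun _ => 1) :=
    fun F c d hF hFcd => (hweak F hF ((measure_mono hFcd).trans_lt measure_Ioo_lt_top)).2
  have hJvol : (volume (Ioo b (2 * b - a))).toReal = b - a := by
    rw [Real.volume_Ioo, ENNReal.toReal_ofReal (by linarith)]
    ring
  have hdist : ∀ x ∈ Ioo b (2 * b - a), ∀ y ∈ Ioo a b, |x - y| ≤ 2 * (b - a) :=
    fun x hx y hy => abs_sub_le_iff.2 ⟨by linarith [hx.2, hy.1], by linarith [hx.1, hy.2]⟩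
  have hJE := Wf_wInt_le_of_weakType_indicator hp hC.le hu hw hE hEab hm (by linarith)
    (hweak' E a b hE hEab) (hu.integrableOn_Ioo b (2 * b - a)) (fun x hx => Or.inr hx.1) hdist
  have hIJ := Wf_wInt_le_of_weakType_indicator hp hC.le hu hw measurableSet_Ioo subset_rfl
    (hJvol ▸ sub_pos.2 hab) (by linarith) (hweak' _ b (2 * b - a) measurableSet_Ioo subset_rfl)
    (hu.integrableOn_Ioo a b) (fun x hx => Or.inl hx.2)
    (fun x hx y hy => abs_sub_comm x y ▸ hdist y hy x hx)
  rw [hJvol] at hIJ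
  calc Wf w (wInt u (Ioo a b))
      ≤ (C * (Real.pi * (2 * (b - a)) / (b - a))) ^ p * Wf w (wInt u (Ioo b (2 * b - a))) := hIJ
    _ ≤ (C * (Real.pi * (2 * (b - a)) / (b - a))) ^ p *
          ((C * (Real.pi * (2 * (b - a)) / (volume E).toReal)) ^ p * Wf w (wInt u E)) := by
        gcongr
    _ = (4 * Real.pi ^ 2 * C ^ 2) ^ p * ((b - a) / (volume E).toReal) ^ p * Wf w (wInt u E) := by
        have hba : b - a ≠ 0 := (sub_pos.2 hab).ne'
        rw [← mul_assoc, ← Real.mul_rpow (by positivity) (by positivity),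
          ← Real.mul_rpow (by positivity) (by positivity)]
        congr 2
        field_simp
        ring
end
end

section
/- Let 0 < p < ∞ and let u, w be weights on ℝ and (0,∞) respectively. Suppose the Hilbert transform H is well defined on Λ^p_u(w) (for every f ∈ Λ^p_u(w) the principal-value limit defining Hf(x) exists for a.e. x) and there is a constant C with ‖Hf‖_{Λ^{p,∞}_u(w)} ≤ C ‖f‖_{Λ^p_u(w)} for all f ∈ Λ^p_u(w). Then there is a constant C′ such that for every bounded interval I, ‖u^{−1}χ_I‖_{(Λ^p_u(w))′} · ‖χ_I‖_{Λ^p_u(w)} ≤ C′ |I|. -/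
open MeasureTheory Filter Topology
open scoped ENNReal NNReal

noncomputable section

/-!
Let `I = (a, b)`, `ℓ = b - a`, and let `J = (b, b + ℓ)` be its right neighbour. For `x ∈ I` and
`y ∈ J` the kernel `1/(x - y)` has constant sign and modulus at least `1/(2ℓ)`, and the truncated
integrals defining `H g (x)` stabilise once `ε < dist x J`. So for `f ∈ Λ^p_u(w)` the function
`g = |f| χ_J` satisfies `|H g| ≥ (∫_J |f|) / (2πℓ)` on `I`, and the weak-type bound turns this into
`‖u⁻¹χ_J‖' ‖χ_I‖ ≤ 2πCℓ`; symmetrically `‖u⁻¹χ_I‖' ‖χ_J‖ ≤ 2πCℓ`. Testing `u⁻¹χ_J` against `χ_J`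
gives `ℓ ≤ ‖u⁻¹χ_J‖' ‖χ_J‖`, and multiplying the two cross estimates and dividing by this one
yields `‖u⁻¹χ_I‖' ‖χ_I‖ ≤ 4π²C²ℓ`.
-/

open Set

section Weights

variable {u w : ℝ → ℝ}

lemma setIntegral_pos_of_forall_pos {α : Type*} [MeasurableSpace α] {μ : Measure α}
    {f : α → ℝ} {s : Set α} (hs : MeasurableSet s) (hfi : IntegrableOn f s μ)
    (hf : ∀ x ∈ s, 0 < f x) (hμ : μ s ≠ 0) :
    0 < ∫ x in s, f x ∂μ := by
  rw [setIntegral_pos_iff_support_of_nonneg_ae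
    (ae_restrict_of_forall_mem hs fun x hx => (hf x hx).le) hfi,
    inter_eq_right.2 fun x hx => Function.mem_support.2 (hf x hx).ne']
  exact pos_iff_ne_zero.2 hμ

lemma IsWeightOn.integrableOn_Ioo_s6 (hw : IsWeightOn w) (r : ℝ) :
    IntegrableOn w (Ioo 0 r) := by
  rcases lt_or_ge 0 r with hr | hr
  · exact hw.2 r hr
  · simp [Ioo_eq_empty_of_le hr]

lemma ofReal_Wf (hw : IsWeightOn w) (r : ℝ) :
    ENNReal.ofReal (Wf w r) = ∫⁻ t in Ioo 0 r, ENNReal.ofReal (w t) :=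
  ofReal_integral_eq_lintegral_ofReal (hw.integrableOn_Ioo_s6 r)
    (ae_restrict_of_forall_mem measurableSet_Ioo fun t ht => (hw.1 t ht.1).le)

lemma Wf_pos (hw : IsWeightOn w) {r : ℝ} (hr : 0 < r) : 0 < Wf w r :=
  setIntegral_pos_of_forall_pos measurableSet_Ioo (hw.2 r hr) (fun t ht => hw.1 t ht.1)
    (by simp [hr])

lemma continuousOn_Wf (hw : IsWeightOn w) (r : ℝ) : ContinuousOn (Wf w) (Icc 0 r) := by
  rcases lt_or_ge 0 r with hr | hr
  · have hint : IntervalIntegrable w volume 0 r := by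
      rw [intervalIntegrable_iff_integrableOn_Ioc_of_le hr.le,
        integrableOn_Ioc_iff_integrableOn_Ioo]
      exact hw.2 r hr
    refine (intervalIntegral.continuousOn_primitive_interval' hint
      (left_mem_uIcc)).mono (Icc_subset_uIcc) |>.congr fun t ht => ?_
    simp only [Wf, intervalIntegral.integral_of_le ht.1, integral_Ioc_eq_integral_Ioo]
  · exact (subsingleton_Icc_of_ge hr).continuousOn _

lemma wMeas_Ioo (hu : IsWeight u) (a b : ℝ) :
    wMeas u (Ioo a b) = ENNReal.ofReal (wInt u (Ioo a b)) :=
  (ofReal_integral_eq_lintegral_ofReal (hu.2.integrableOn_isCompact isCompact_Icc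
    |>.mono_set Ioo_subset_Icc_self) (Eventually.of_forall fun x => (hu.1 x).le)).symm

lemma wMeas_Ioo_ne_top (hu : IsWeight u) (a b : ℝ) : wMeas u (Ioo a b) ≠ ⊤ := by
  simp [wMeas_Ioo hu]

lemma wInt_Ioo_pos (hu : IsWeight u) {a b : ℝ} (hab : a < b) : 0 < wInt u (Ioo a b) :=
  setIntegral_pos_of_forall_pos measurableSet_Ioo
    (hu.2.integrableOn_isCompact isCompact_Icc |>.mono_set Ioo_subset_Icc_self)
    (fun x _ => hu.1 x) (by simp [hab])

end Weights

section Rearrangement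

variable {p : ℝ} {u w : ℝ → ℝ}

lemma rearr_mono {f g : ℝ → ℝ} (h : ∀ x, |g x| ≤ |f x|) (t : ℝ) :
    rearr u g t ≤ rearr u f t :=
  sInf_le_sInf fun _ hs => (lintegral_mono_set fun x hx =>
    lt_of_lt_of_le hx (ENNReal.ofReal_le_ofReal (h x))).trans hs

lemma lorentzNorm_mono (hp : 0 ≤ p) {f g : ℝ → ℝ} (h : ∀ x, |g x| ≤ |f x|) :
    lorentzNorm p u w g ≤ lorentzNorm p u w f := by
  unfold lorentzNorm lorentzNormE
  gcongr with t
  exact rearr_mono h t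

lemma rearr_indicator (E : Set ℝ) (t : ℝ) :
    rearr u (E.indicator fun _ => (1:ℝ)) t
      = if ENNReal.ofReal t < wMeas u E then 1 else 0 := by
  have hlevel : ∀ s : ℝ≥0∞, wMeas u {x | s < ENNReal.ofReal |E.indicator (fun _ => (1:ℝ)) x|}
      = if s < 1 then wMeas u E else 0 := by
    intro s
    split_ifs with hs
    · congr 1
      ext x
      by_cases hx : x ∈ E <;> simp [hx, hs]
    · have : {x | s < ENNReal.ofReal |E.indicator (fun _ => (1:ℝ)) x|} = ∅ := by
        ext x
        by_cases hx : x ∈ E <;> simp [hx, not_lt.1 hs]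
      simp [wMeas, this]
  unfold rearr rearrE
  split_ifs with ht
  · refine le_antisymm (sInf_le (by simp [hlevel])) (le_sInf fun s hs => ?_)
    by_contra! hs1
    simp only [mem_ofPred_eq, hlevel, if_pos hs1] at hs
    exact (ht.trans_le hs).false
  · exact le_antisymm (sInf_le (by simpa [hlevel] using ht)) bot_le

lemma ofReal_le_rearr_of_forall_le_abs {h : ℝ → ℝ} {E : Set ℝ} {t c : ℝ}
    (ht : ENNReal.ofReal t < wMeas u E) (hc : ∀ x ∈ E, c ≤ |h x|) :
    ENNReal.ofReal c ≤ rearr u h t := by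
  refine le_sInf fun s hs => ?_
  by_contra! hsc
  have hsub : E ⊆ {x | s < ENNReal.ofReal |h x|} := fun x hx =>
    hsc.trans_le (ENNReal.ofReal_le_ofReal (hc x hx))
  exact (ht.trans_le ((lintegral_mono_set hsub).trans hs)).false

lemma lorentzNorm_indicator (hp : 0 < p) (hw : IsWeightOn w) {E : Set ℝ}
    (hE : wMeas u E ≠ ⊤) :
    lorentzNorm p u w (E.indicator fun _ => (1:ℝ))
      = ENNReal.ofReal (Wf w (wMeas u E).toReal) ^ (1/p) := by
  unfold lorentzNorm lorentzNormE
  rw [ofReal_Wf hw]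
  congr 1
  calc ∫⁻ t in Ioi 0, rearr u (E.indicator fun _ => (1:ℝ)) t ^ p * ENNReal.ofReal (w t)
      = ∫⁻ t in Ioi 0, (Ioo 0 (wMeas u E).toReal).indicator (fun t => ENNReal.ofReal (w t)) t :=
        setLIntegral_congr_fun measurableSet_Ioi fun t ht => by
          have hiff : ENNReal.ofReal t < wMeas u E ↔ t < (wMeas u E).toReal :=
            ENNReal.ofReal_lt_iff_lt_toReal (le_of_lt ht) hE
          by_cases htE : t < (wMeas u E).toReal
          · simp [rearr_indicator, hiff, htE, indicator_of_mem (mem_Ioo.2 ⟨ht, htE⟩)]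
          · simp [rearr_indicator, hiff, htE, ENNReal.zero_rpow_of_pos hp]
    _ = ∫⁻ t in Ioo 0 (wMeas u E).toReal, ENNReal.ofReal (w t) := by
        rw [lintegral_indicator measurableSet_Ioo, Measure.restrict_restrict measurableSet_Ioo,
          inter_eq_self_of_subset_left Ioo_subset_Ioi_self]

lemma lorentzNorm_indicator_mul_le_weakLorentzNorm (hp : 0 < p) (hw : IsWeightOn w)
    {E : Set ℝ} (hE : wMeas u E ≠ ⊤) {h : ℝ → ℝ} {c : ℝ} (hc : ∀ x ∈ E, c ≤ |h x|) :
    lorentzNorm p u w (E.indicator fun _ => (1:ℝ)) * ENNReal.ofReal c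
      ≤ weakLorentzNorm p u w h := by
  rw [lorentzNorm_indicator hp hw hE]
  set r := (wMeas u E).toReal
  rcases eq_or_lt_of_le (ENNReal.toReal_nonneg : 0 ≤ r) with hr | hr
  · simp [show r = 0 from hr.symm, Wf, ENNReal.zero_rpow_of_pos, hp]
  have hbound : ∀ t ∈ Ioo 0 r,
      ENNReal.ofReal (Wf w t) ^ (1/p) * ENNReal.ofReal c ≤ weakLorentzNorm p u w h :=
    fun t ht => (mul_le_mul' le_rfl (ofReal_le_rearr_of_forall_le_abs
      ((ENNReal.ofReal_lt_iff_lt_toReal ht.1.le hE).2 ht.2) hc)).trans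
      (le_iSup₂ (f := fun t _ => ENNReal.ofReal (Wf w t) ^ (1/p) * rearr u h t) t ht.1)
  have hcont : ContinuousOn (fun t => ENNReal.ofReal (Wf w t) ^ (1/p) * ENNReal.ofReal c)
      (Icc 0 r) :=
    (ENNReal.continuous_mul_const ENNReal.ofReal_ne_top).comp_continuousOn
      (ENNReal.continuous_rpow_const.comp_continuousOn
        (ENNReal.continuous_ofReal.comp_continuousOn (continuousOn_Wf hw r)))
  have hr_mem : r ∈ Icc 0 r := ⟨hr.le, le_rfl⟩
  exact ContinuousWithinAt.closure_le (by rwa [closure_Ioo hr.ne])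
    ((hcont r hr_mem).mono Ioo_subset_Icc_self) continuousWithinAt_const hbound

lemma memLambda_indicator_Ioo (hp : 0 < p) (hu : IsWeight u) (hw : IsWeightOn w) (a b : ℝ) :
    MemLambda p u w ((Ioo a b).indicator fun _ => (1:ℝ)) := by
  refine ⟨measurable_const.indicator measurableSet_Ioo, ?_⟩
  rw [lorentzNorm_indicator hp hw (wMeas_Ioo_ne_top hu a b)]
  exact ENNReal.rpow_lt_top_of_nonneg (by positivity) ENNReal.ofReal_ne_top

lemma lorentzNorm_indicator_Ioo_ne_zero (hp : 0 < p) (hu : IsWeight u) (hw : IsWeightOn w)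
    {a b : ℝ} (hab : a < b) :
    lorentzNorm p u w ((Ioo a b).indicator fun _ => (1:ℝ)) ≠ 0 := by
  rw [lorentzNorm_indicator hp hw (wMeas_Ioo_ne_top hu a b), wMeas_Ioo hu,
    ENNReal.toReal_ofReal (wInt_Ioo_pos hu hab).le]
  exact (ENNReal.rpow_pos (ENNReal.ofReal_pos.2 (Wf_pos hw (wInt_Ioo_pos hu hab)))
    ENNReal.ofReal_ne_top).ne'

end Rearrangement

section Associate

variable {p : ℝ} {u w : ℝ → ℝ}

lemma abs_integral_le_assocNorm_mul {f g : ℝ → ℝ} (hf : MemLambda p u w f)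
    (hf0 : lorentzNorm p u w f ≠ 0) :
    ENNReal.ofReal |∫ x, f x * g x * u x| ≤ assocNorm p u w g * lorentzNorm p u w f :=
  (ENNReal.div_le_iff hf0 hf.2.ne).1 (le_iSup₂_of_le f hf (le_iSup_of_le hf0 le_rfl))

lemma assocNorm_mul_le_of_forall {g : ℝ → ℝ} {N K : ℝ≥0∞}
    (h : ∀ f, MemLambda p u w f → lorentzNorm p u w f ≠ 0 →
      N * ENNReal.ofReal |∫ x, f x * g x * u x| ≤ K * lorentzNorm p u w f) :
    assocNorm p u w g * N ≤ K := by
  simp only [assocNorm, ENNReal.iSup_mul]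
  refine iSup₂_le fun f hf => iSup_le fun hf0 => ?_
  rw [← ENNReal.mul_div_right_comm, mul_comm _ N]
  exact ENNReal.div_le_of_le_mul (h f hf hf0)

lemma integral_mul_inv_mul_indicator (hu : ∀ x, u x ≠ 0) {F : Set ℝ} (hF : MeasurableSet F)
    (f : ℝ → ℝ) :
    ∫ x, f x * ((u x)⁻¹ * F.indicator (fun _ => (1:ℝ)) x) * u x = ∫ x in F, f x := by
  rw [← integral_indicator hF]
  congr 1 with x
  by_cases hx : x ∈ F <;> simp [hx, hu x]

lemma sub_le_assocNorm_mul_lorentzNorm_indicator (hp : 0 < p) (hu : IsWeight u)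
    (hw : IsWeightOn w) {c d : ℝ} (hcd : c < d) :
    ENNReal.ofReal (d - c)
      ≤ assocNorm p u w (fun x => (u x)⁻¹ * (Ioo c d).indicator (fun _ => (1:ℝ)) x)
          * lorentzNorm p u w ((Ioo c d).indicator fun _ => (1:ℝ)) := by
  have h := abs_integral_le_assocNorm_mul
    (g := fun x => (u x)⁻¹ * (Ioo c d).indicator (fun _ => (1:ℝ)) x)
    (memLambda_indicator_Ioo hp hu hw c d) (lorentzNorm_indicator_Ioo_ne_zero hp hu hw hcd)
  rwa [integral_mul_inv_mul_indicator (fun x => (hu.1 x).ne') measurableSet_Ioo,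
    setIntegral_congr_fun measurableSet_Ioo fun x hx => indicator_of_mem hx _,
    setIntegral_const, smul_eq_mul, mul_one, Measure.real, Real.volume_Ioo,
    ENNReal.toReal_ofReal (sub_pos.2 hcd).le, abs_of_pos (sub_pos.2 hcd)] at h

end Associate

section Hilbert

lemma HasHilbert.hilbert_eq {f : ℝ → ℝ} {x L : ℝ} (h : HasHilbert f x L) : hilbert f x = L :=
  h.limUnder_eq

lemma hasHilbert_of_forall_le_abs_sub {g : ℝ → ℝ} {x δ : ℝ} (hδ : 0 < δ)
    (hg : ∀ y, g y ≠ 0 → δ ≤ |x - y|) :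
    HasHilbert g x (1 / Real.pi * ∫ y, g y / (x - y)) := by
  refine tendsto_const_nhds.congr' ?_
  filter_upwards [Ioo_mem_nhdsGT hδ] with ε hε
  rw [pvIntegral, setIntegral_eq_integral_of_forall_compl_eq_zero fun y hy => ?_]
  have : g y = 0 := by
    by_contra h0
    exact hy (hε.2.trans_le (hg y h0))
  simp [this]

lemma integral_div_le_abs_hilbert {g : ℝ → ℝ} (hg0 : ∀ y, 0 ≤ g y) (hgi : Integrable g)
    {x δ D σ : ℝ} (hδ : 0 < δ) (hσ : |σ| = 1)
    (hg : ∀ y, g y ≠ 0 → δ ≤ σ * (x - y) ∧ σ * (x - y) ≤ D) :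
    (∫ y, g y) / (Real.pi * D) ≤ |hilbert g x| := by
  have hdist : ∀ y, g y ≠ 0 → δ ≤ |x - y| := fun y hy =>
    (hg y hy).1.trans ((le_abs_self _).trans (by rw [abs_mul, hσ, one_mul]))
  rw [(hasHilbert_of_forall_le_abs_sub hδ hdist).hilbert_eq]
  set I := ∫ y, g y / (x - y)
  have hψ : Integrable (fun y => g y / (x - y)) := by
    have hmeas : AEStronglyMeasurable (fun y => g y / (x - y)) := by
      simp only [div_eq_mul_inv]
      exact hgi.1.mul (Measurable.aestronglyMeasurable (by fun_prop))
    refine (hgi.div_const δ).mono' hmeas (Eventually.of_forall fun y => ?_)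
    by_cases hy : g y = 0
    · simp [hy]
    rw [Real.norm_eq_abs, abs_div, abs_of_nonneg (hg0 y)]
    exact div_le_div_of_nonneg_left (hg0 y) hδ (hdist y hy)
  have hpt : ∀ y, g y / D ≤ σ * (g y / (x - y)) := fun y => by
    by_cases hy : g y = 0
    · simp [hy]
    have hle := div_le_div_of_nonneg_left (hg0 y) (hδ.trans_le (hg y hy).1) (hg y hy).2
    rcases (abs_eq zero_le_one).1 hσ with rfl | rfl
    · simpa using hle
    · rw [neg_one_mul]
      rwa [neg_one_mul, div_neg] at hle
  have hσI : (∫ y, g y) / D ≤ |I| := calc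
    (∫ y, g y) / D = ∫ y, g y / D := (integral_div _ _).symm
    _ ≤ ∫ y, σ * (g y / (x - y)) := integral_mono (hgi.div_const D) (hψ.const_mul σ) hpt
    _ = σ * I := integral_const_mul σ _
    _ ≤ |I| := (le_abs_self _).trans (by rw [abs_mul, hσ, one_mul])
  calc (∫ y, g y) / (Real.pi * D) = 1 / Real.pi * ((∫ y, g y) / D) := by ring
    _ ≤ 1 / Real.pi * |I| := by gcongr
    _ = |1 / Real.pi * I| := by rw [abs_mul, abs_of_pos (one_div_pos.2 Real.pi_pos)]

end Hilbert

lemma assocNorm_mul_lorentzNorm_le_of_weak_type {p C D σ : ℝ} (hp : 0 < p) {u w : ℝ → ℝ}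
    (hu : ∀ x, u x ≠ 0) (hw : IsWeightOn w)
    (hbdd : ∀ f : ℝ → ℝ, MemLambda p u w f →
      weakLorentzNorm p u w (hilbert f) ≤ ENNReal.ofReal C * lorentzNorm p u w f)
    {E F : Set ℝ} (hE : wMeas u E ≠ ⊤) (hF : MeasurableSet F) (hD : 0 < D) (hσ : |σ| = 1)
    (hEF : ∀ x ∈ E, ∃ δ, 0 < δ ∧ ∀ y ∈ F, δ ≤ σ * (x - y) ∧ σ * (x - y) ≤ D) :
    assocNorm p u w (fun x => (u x)⁻¹ * F.indicator (fun _ => (1:ℝ)) x)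
        * lorentzNorm p u w (E.indicator fun _ => (1:ℝ))
      ≤ ENNReal.ofReal (Real.pi * D * C) := by
  refine assocNorm_mul_le_of_forall fun f hf _ => ?_
  rw [integral_mul_inv_mul_indicator hu hF]
  by_cases hfF : IntegrableOn f F
  swap
  · simp [integral_undef hfF]
  set N := lorentzNorm p u w (E.indicator fun _ => (1:ℝ))
  set g := F.indicator fun x => |f x|
  have hgf : ∀ x, |g x| ≤ |f x| := fun x => by
    by_cases hx : x ∈ F <;> simp [g, hx]
  have hg : MemLambda p u w g :=
    ⟨hf.1.abs.indicator hF, (lorentzNorm_mono hp.le hgf).trans_lt hf.2⟩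
  have hHg : ∀ x ∈ E, (∫ y, g y) / (Real.pi * D) ≤ |hilbert g x| := fun x hx => by
    obtain ⟨δ, hδ, hxF⟩ := hEF x hx
    refine integral_div_le_abs_hilbert (fun y => indicator_nonneg (fun _ _ => abs_nonneg _) y)
      ((integrable_indicator_iff hF).2 hfF.abs) hδ hσ fun y hy => hxF y ?_
    by_contra hyF
    exact hy (indicator_of_notMem hyF _)
  have hπD : 0 < Real.pi * D := by positivity
  calc N * ENNReal.ofReal |∫ x in F, f x|
      ≤ N * ENNReal.ofReal (∫ y, g y) := by
        gcongr
        exact abs_integral_le_integral_abs.trans (integral_indicator hF).ge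
    _ = ENNReal.ofReal (Real.pi * D) * (N * ENNReal.ofReal ((∫ y, g y) / (Real.pi * D))) := by
        rw [mul_left_comm, ← ENNReal.ofReal_mul hπD.le, mul_div_cancel₀ _ hπD.ne']
    _ ≤ ENNReal.ofReal (Real.pi * D) * (ENNReal.ofReal C * lorentzNorm p u w f) := by
        refine mul_le_mul' le_rfl ?_
        exact (lorentzNorm_indicator_mul_le_weakLorentzNorm hp hw hE hHg).trans
          ((hbdd g hg).trans (by gcongr; exact lorentzNorm_mono hp.le hgf))
    _ = ENNReal.ofReal (Real.pi * D * C) * lorentzNorm p u w f := by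
        rw [← mul_assoc, ← ENNReal.ofReal_mul hπD.le]

lemma ENNReal.mul_le_mul_div_of_cross {a b c d k l : ℝ≥0∞} (hk : k ≠ 0) (hk' : k ≠ ⊤)
    (had : a * d ≤ k) (hcb : c * b ≤ k) (hl : l ≤ c * d) :
    a * b ≤ k * k / l := by
  calc a * b ≤ k * k / (c * d) := by
        rw [ENNReal.le_div_iff_mul_le (Or.inr (mul_ne_zero hk hk))
          (Or.inr (ENNReal.mul_ne_top hk' hk'))]
        calc a * b * (c * d) = (a * d) * (c * b) := by ring
          _ ≤ k * k := mul_le_mul' had hcb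
    _ ≤ k * k / l := ENNReal.div_le_div_left hl _

theorem duality_condition_of_weak_type_general (p : ℝ) (hp : 0 < p) (u w : ℝ → ℝ)
    (hu : IsWeight u) (hw : IsWeightOn w)
    (hbdd : ∃ C : ℝ, 0 < C ∧ ∀ f : ℝ → ℝ, MemLambda p u w f →
      weakLorentzNorm p u w (hilbert f) ≤ ENNReal.ofReal C * lorentzNorm p u w f) :
    ∃ C' : ℝ, 0 < C' ∧ ∀ a b : ℝ, a < b →
      assocNorm p u w (fun x => (u x)⁻¹ * (Set.Ioo a b).indicator (fun _ => (1:ℝ)) x) *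
          lorentzNorm p u w ((Set.Ioo a b).indicator fun _ => (1:ℝ))
        ≤ ENNReal.ofReal (C' * (b - a)) := by
  obtain ⟨C, hC, hbdd⟩ := hbdd
  refine ⟨4 * Real.pi ^ 2 * C ^ 2, by positivity, fun a b hab => ?_⟩
  set ℓ := b - a
  have hℓ : 0 < ℓ := sub_pos.2 hab
  have hu0 : ∀ x, u x ≠ 0 := fun x => (hu.1 x).ne'
  have hAM := assocNorm_mul_lorentzNorm_le_of_weak_type (σ := 1) (D := 2 * ℓ)
    (E := Ioo b (b + ℓ)) (F := Ioo a b) hp hu0 hw hbdd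
    (wMeas_Ioo_ne_top hu b (b + ℓ)) measurableSet_Ioo (by positivity) abs_one
    fun x hx => ⟨x - b, by linarith [hx.1], fun y hy => by
      constructor <;> linarith [hx.1, hx.2, hy.1, hy.2]⟩
  have hBN := assocNorm_mul_lorentzNorm_le_of_weak_type (σ := -1) (D := 2 * ℓ)
    (E := Ioo a b) (F := Ioo b (b + ℓ)) hp hu0 hw hbdd
    (wMeas_Ioo_ne_top hu a b) measurableSet_Ioo (by positivity) (by simp)
    fun x hx => ⟨b - x, by linarith [hx.2], fun y hy => by
      constructor <;> linarith [hx.1, hx.2, hy.1, hy.2]⟩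
  have hBM := sub_le_assocNorm_mul_lorentzNorm_indicator hp hu hw (lt_add_of_pos_right b hℓ)
  rw [add_sub_cancel_left] at hBM
  refine (ENNReal.mul_le_mul_div_of_cross (by simp; positivity) ENNReal.ofReal_ne_top
    hAM hBN hBM).trans_eq ?_
  rw [← ENNReal.ofReal_mul (by positivity), ← ENNReal.ofReal_div_of_pos hℓ]
  congr 1
  field_simp
  ring

/-- the weak-type boundedness of `H` on `Λ^p_u(w)` implies the duality
condition on intervals. -/
theorem duality_condition_of_weak_type (p : ℝ) (hp : 0 < p) (u w : ℝ → ℝ)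
    (hu : IsWeight u) (hw : IsWeightOn w)
    (hdef : ∀ f : ℝ → ℝ, MemLambda p u w f → ∀ᵐ x : ℝ ∂volume, ∃ L, HasHilbert f x L)
    (hbdd : ∃ C : ℝ, 0 < C ∧ ∀ f : ℝ → ℝ, MemLambda p u w f →
      weakLorentzNorm p u w (hilbert f) ≤ ENNReal.ofReal C * lorentzNorm p u w f) :
    ∃ C' : ℝ, 0 < C' ∧ ∀ a b : ℝ, a < b →
      assocNorm p u w (fun x => (u x)⁻¹ * (Set.Ioo a b).indicator (fun _ => (1:ℝ)) x) *
          lorentzNorm p u w ((Set.Ioo a b).indicator fun _ => (1:ℝ))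
        ≤ ENNReal.ofReal (C' * (b - a)) :=
  duality_condition_of_weak_type_general p hp u w hu hw hbdd
end
end
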